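/- arXiv:2201.10441 — 5 statements merged into one kernel-verified Lean document; each statement's English description precedes it below -/
import Mathlib

section
/- The exact fine-grid solution u is a fixed point of the two-grid FAS/MGRIT iteration with τ-correction: if the current iterate v equals u (the solution of the fine-grid problem), then the iterate v' produced by one two-grid iteration (computation of τ at the C-points, sequential coarse solve with the τ-corrected coarse equation, injection back to the C-points, and F-relaxation) also equals u. -/
/-- `sweep Φ f base k w` is `w^{(k)}`, where `w^{(0)} = w` and
`w^{(k)} = Φ(w^{(k-1)}) + f (base + k)` for `k ≥ 1`. -/
def sweep {d : ℕ} (Φ : (Fin d → ℝ) → Fin d → ℝ) (f : ℕ → Fin d → ℝ) (base : ℕ) :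
    ℕ → (Fin d → ℝ) → (Fin d → ℝ)
  | 0, w => w
  | (k + 1), w => Φ (sweep Φ f base k w) + f (base + (k + 1))

/-- The ideal coarse propagator across the `j`-th coarse interval:
`ψ_j(w) = Φ(w^{(m-1)})` with `w^{(0)} = w`, `w^{(k)} = Φ(w^{(k-1)}) + f_{(j-1)m+k}`. -/
def psi {d : ℕ} (Φ : (Fin d → ℝ) → Fin d → ℝ) (f : ℕ → Fin d → ℝ) (m j : ℕ)
    (w : Fin d → ℝ) : Fin d → ℝ :=
  Φ (sweep Φ f ((j - 1) * m) (m - 1) w)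

/-- The exact fine-grid solution `u` is a fixed point of the two-grid FAS/MGRIT iteration
with τ-correction: if the current iterate `v` equals `u`, then the iterate `v'` produced by
one two-grid iteration (τ-computation, coarse solve, injection, F-relaxation) also equals
`u` (at every time point `0 ≤ i ≤ n`). -/
theorem stmt3 {d n m : ℕ} (hd : 1 ≤ d) (hn : 1 ≤ n) (hm : 1 ≤ m) (hdvd : m ∣ n)
    (Φ Φc : (Fin d → ℝ) → Fin d → ℝ) (f u v τ w v' : ℕ → Fin d → ℝ)
    -- the fine-grid solution u
    (hu0 : u 0 = f 0) (hu : ∀ i, 1 ≤ i → i ≤ n → u i = Φ (u (i - 1)) + f i)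
    -- the current iterate equals u
    (hv : ∀ i ≤ n, v i = u i)
    -- (i) τ-computation at C-points
    (hτ : ∀ j, 1 ≤ j → j ≤ n / m →
      τ j = psi Φ f m j (v ((j - 1) * m)) - Φc (v ((j - 1) * m)))
    -- (ii) coarse solve
    (hw0 : w 0 = f 0)
    (hw : ∀ j, 1 ≤ j → j ≤ n / m → w j = Φc (w (j - 1)) + τ j + f (j * m))
    -- (iii) injection to C-points and F-relaxation
    (hC : ∀ j ≤ n / m, v' (j * m) = w j)
    (hF : ∀ j, j < n / m → ∀ k, 1 ≤ k → k ≤ m - 1 →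
      v' (j * m + k) = Φ (v' (j * m + k - 1)) + f (j * m + k)) :
    ∀ i ≤ n, v' i = u i := by

  have hNm : n / m * m = n := Nat.div_mul_cancel hdvd
  -- sweep along u reproduces u
  have hsweep : ∀ j, 1 ≤ j → j ≤ n / m → ∀ k, k ≤ m - 1 →
      sweep Φ f ((j - 1) * m) k (u ((j - 1) * m)) = u ((j - 1) * m + k) := by
    intro j hj1 hj2 k
    induction k with
    | zero => intro _; simp [sweep]
    | succ k ih =>
      intro hk
      have hk' : k ≤ m - 1 := by omega
      have hjm : j * m ≤ n := by
        calc j * m ≤ (n / m) * m := Nat.mul_le_mul_right m hj2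
        _ = n := hNm
      have hjj : (j - 1) * m + m = j * m := by
        cases j with
        | zero => omega
        | succ j => simp [Nat.succ_sub_one, Nat.succ_mul]
      have hle : (j - 1) * m + (k + 1) ≤ n := by omega
      rw [sweep, ih hk']
      have h1 : 1 ≤ (j - 1) * m + (k + 1) := by omega
      have := hu ((j - 1) * m + (k + 1)) h1 hle
      have heq : (j - 1) * m + (k + 1) - 1 = (j - 1) * m + k := by omega
      rw [heq] at this
      exact this.symm
  -- coarse solve reproduces u at C-points
  have hwj : ∀ j ≤ n / m, w j = u (j * m) := by
    intro j
    induction j with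
    | zero => intro _; simpa [hw0] using hu0.symm
    | succ j ih =>
      intro hj
      have hj' : j ≤ n / m := by omega
      have hjm : j * m ≤ n := by
        calc j * m ≤ (n / m) * m := Nat.mul_le_mul_right m hj'
        _ = n := hNm
      have hjm1 : (j + 1) * m ≤ n := by
        calc (j + 1) * m ≤ (n / m) * m := Nat.mul_le_mul_right m hj
        _ = n := hNm
      rw [hw (j + 1) (by omega) hj, hτ (j + 1) (by omega) hj]
      simp only [Nat.add_sub_cancel]
      have hJ : (j + 1 - 1) * m = j * m := by simp
      rw [hv (j * m) hjm, ih hj']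
      have hpsi : psi Φ f m (j + 1) (u (j * m)) = Φ (u (j * m + (m - 1))) := by
        have hs := hsweep (j + 1) (by omega) hj (m - 1) le_rfl
        rw [hJ] at hs
        unfold psi
        rw [hJ]
        exact congrArg Φ hs
      rw [hpsi]
      have h1 : 1 ≤ (j + 1) * m := by nlinarith
      have := hu ((j + 1) * m) h1 hjm1
      have heq : (j + 1) * m - 1 = j * m + (m - 1) := by
        have : (j + 1) * m = j * m + m := by ring
        omega
      rw [heq] at this
      rw [this]
      abel
  -- F-relaxation
  have hF' : ∀ j, j < n / m → ∀ k, k ≤ m - 1 → v' (j * m + k) = u (j * m + k) := by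
    intro j hj k
    induction k with
    | zero =>
      intro _
      simpa using (hC j (le_of_lt hj)).trans (hwj j (le_of_lt hj))
    | succ k ih =>
      intro hk
      have hk' : k ≤ m - 1 := by omega
      have hjm : (j + 1) * m ≤ n := by
        calc (j + 1) * m ≤ (n / m) * m := Nat.mul_le_mul_right m hj
        _ = n := hNm
      have hmm : (j + 1) * m = j * m + m := by ring
      have hle : j * m + (k + 1) ≤ n := by omega
      rw [hF j hj (k + 1) (by omega) hk]
      have heq : j * m + (k + 1) - 1 = j * m + k := by omega
      rw [heq, ih hk']
      have := hu (j * m + (k + 1)) (by omega) hle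
      rw [heq] at this
      exact this.symm
  -- conclusion
  intro i hi
  have hmod : i % m < m := Nat.mod_lt i (by omega)
  have hi' : i = (i / m) * m + i % m := (Nat.div_add_mod' i m).symm
  by_cases hk0 : i % m = 0
  · have hj : i / m ≤ n / m := Nat.div_le_div_right hi
    have := (hC (i / m) hj).trans (hwj (i / m) hj)
    rw [hi', hk0]
    simpa [hk0] using this
  · have hj : i / m < n / m := by
      have h1 : (i / m) * m < n := by omega
      have h2 : (i / m) * m < (n / m) * m := by omega
      exact lt_of_mul_lt_mul_right h2 (Nat.zero_le m)
    have := hF' (i / m) hj (i % m) (by omega)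
    rw [hi']
    exact this
end

section
/- One two-grid FAS/MGRIT iteration with τ-correction extends the set of exact C-points by at least one: if the current iterate v satisfies v_{jm} = u_{jm} for all 0 ≤ j ≤ k (where u is the exact fine-grid solution and k < N_c), then the iterate v' produced by one two-grid iteration satisfies v'_i = u_i for all indices 0 ≤ i ≤ (k+1)m. -/
/-- One two-grid FAS/MGRIT iteration with τ-correction extends the set of exact C-points by
at least one: if the current iterate `v` satisfies `v_{jm} = u_{jm}` for all `0 ≤ j ≤ K`
(with `K < N_c`), then the new iterate `v'` satisfies `v'_i = u_i` for all
`0 ≤ i ≤ (K+1)m`. -/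
theorem stmt4 {d n m K : ℕ} (hd : 1 ≤ d) (hn : 1 ≤ n) (hm : 1 ≤ m) (hdvd : m ∣ n)
    (hK : K < n / m)
    (Φ Φc : (Fin d → ℝ) → Fin d → ℝ) (f u v τ w v' : ℕ → Fin d → ℝ)
    -- the fine-grid solution u
    (hu0 : u 0 = f 0) (hu : ∀ i, 1 ≤ i → i ≤ n → u i = Φ (u (i - 1)) + f i)
    -- the current iterate agrees with u at the C-points up to index K
    (hv : ∀ j ≤ K, v (j * m) = u (j * m))
    -- (i) τ-computation at C-points
    (hτ : ∀ j, 1 ≤ j → j ≤ n / m →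
      τ j = psi Φ f m j (v ((j - 1) * m)) - Φc (v ((j - 1) * m)))
    -- (ii) coarse solve
    (hw0 : w 0 = f 0)
    (hw : ∀ j, 1 ≤ j → j ≤ n / m → w j = Φc (w (j - 1)) + τ j + f (j * m))
    -- (iii) injection to C-points and F-relaxation
    (hC : ∀ j ≤ n / m, v' (j * m) = w j)
    (hF : ∀ j, j < n / m → ∀ k, 1 ≤ k → k ≤ m - 1 →
      v' (j * m + k) = Φ (v' (j * m + k - 1)) + f (j * m + k)) :
    ∀ i ≤ (K + 1) * m, v' i = u i := by
  have hmn : (n / m) * m = n := Nat.div_mul_cancel hdvd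
  have hK1 : K + 1 ≤ n / m := hK
  have hsweep : ∀ b k, b + k ≤ n → sweep Φ f b k (u b) = u (b + k) := by
    intro b k
    induction k with
    | zero => intro _; simp [sweep]
    | succ k ih =>
      intro hle
      have he : b + (k + 1) - 1 = b + k := by omega
      rw [sweep, ih (by omega), hu (b + (k + 1)) (by omega) hle, he]
  have hwC : ∀ j ≤ K + 1, w j = u (j * m) := by
    intro j
    induction j with
    | zero => intro _; simp [hw0, hu0]
    | succ j ih =>
      intro hj
      have hjn : j + 1 ≤ n / m := by omega
      have hjmn : (j + 1) * m ≤ n := by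
        calc (j + 1) * m ≤ (n / m) * m := Nat.mul_le_mul_right m hjn
          _ = n := hmn
      have hwj : w j = u (j * m) := ih (by omega)
      have hvj : v (j * m) = u (j * m) := hv j (by omega)
      rw [hw (j + 1) (by omega) hjn, hτ (j + 1) (by omega) hjn]
      have hb : (j + 1 - 1) * m = j * m := by simp
      simp only [Nat.add_sub_cancel]
      rw [hvj, hwj]
      have hpsi : psi Φ f m (j + 1) (u (j * m)) = Φ (u (j * m + (m - 1))) := by
        unfold psi
        rw [hb, hsweep (j * m) (m - 1) (by
          have : (j + 1) * m = j * m + m := by ring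
          omega)]
      rw [hpsi]
      have hum : u ((j + 1) * m) = Φ (u (j * m + (m - 1))) + f ((j + 1) * m) := by
        have he : (j + 1) * m - 1 = j * m + (m - 1) := by
          have : (j + 1) * m = j * m + m := by ring
          omega
        rw [hu ((j + 1) * m) (by nlinarith) hjmn, he]
      rw [hum]
      abel
  have hvC : ∀ j ≤ K + 1, v' (j * m) = u (j * m) := by
    intro j hj
    rw [hC j (by omega), hwC j hj]
  have hvF : ∀ j ≤ K, ∀ k ≤ m - 1, v' (j * m + k) = u (j * m + k) := by
    intro j hj k
    induction k with
    | zero => intro _; simpa using hvC j (by omega)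
    | succ k ih =>
      intro hk
      have hjlt : j < n / m := by omega
      have hbound : j * m + (k + 1) ≤ n := by
        have h1 : (j + 1) * m ≤ (n / m) * m := Nat.mul_le_mul_right m (by omega)
        have h2 : j * m + (k + 1) ≤ (j + 1) * m := by
          have : k + 1 ≤ m := by omega
          nlinarith
        omega
      rw [hF j hjlt (k + 1) (by omega) hk]
      have he : j * m + (k + 1) - 1 = j * m + k := by omega
      have he2 : j * m + (k + 1) - 1 = j * m + k := by omega
      rw [he, ih (by omega), hu (j * m + (k + 1)) (by omega) hbound, he2]
  intro i hi
  have hdm := Nat.div_add_mod i m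
  set j := i / m with hjdef
  set k := i % m with hkdef
  have hklt : k < m := Nat.mod_lt _ (by omega)
  have hieq : i = j * m + k := by rw [Nat.mul_comm]; exact hdm.symm
  rcases Nat.eq_zero_or_pos k with hk0 | hkpos
  · have hjle : j ≤ K + 1 := by
      by_contra hc
      push_neg at hc
      have h1 : (K + 2) * m ≤ j * m := Nat.mul_le_mul_right m hc
      have h2 : j * m + k ≤ (K + 1) * m := by rw [← hieq]; exact hi
      have h3 : (K + 1) * m + m ≤ j * m := by nlinarith
      linarith
    rw [hieq, hk0, Nat.add_zero]
    exact hvC j hjle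
  · have hjle : j ≤ K := by
      by_contra hc
      push_neg at hc
      have h1 : (K + 1) * m ≤ j * m := Nat.mul_le_mul_right m hc
      have h2 : j * m + k ≤ (K + 1) * m := by rw [← hieq]; exact hi
      linarith
    rw [hieq]
    exact hvF j hjle k (by omega)
end

section
/- Two-grid MGRIT with Δ-correction and trivial coarse propagator Φ_c ≡ 0 is exactly Newton's method applied to the ideal coarse-grid residual equation. Precisely: assume each ψ_j is Fréchet differentiable; define the ideal coarse space-time operator A_* : (ℝ^d)^{N_c+1} → (ℝ^d)^{N_c+1} by (A_*(w))_0 = w_0 and (A_*(w))_j = w_j − ψ_j(w_{j−1}) for 1 ≤ j ≤ N_c, and set f_c = (f_0, f_m, f_{2m}, …, f_n). Then DA_*(w) is invertible for every w, and for any current coarse iterate w^k, the Δ-corrected coarse solve with Φ_c ≡ 0 — namely w^{k+1}_0 = f_0 and w^{k+1}_j = ψ_j(w^k_{j−1}) + Dψ_j(w^k_{j−1})(w^{k+1}_{j−1} − w^k_{j−1}) + f_{jm} for 1 ≤ j ≤ N_c — produces exactly the Newton iterate w^{k+1} = w^k + (DA_*(w^k))^{−1}(f_c − A_*(w^k)).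 -/
/-- The ideal coarse space-time operator `A_*` on `(ℝ^d)^{N_c+1}`:
`(A_* w)_0 = w_0` and `(A_* w)_j = w_j - ψ_j(w_{j-1})` for `1 ≤ j ≤ N_c`. -/
def Astar {d Nc : ℕ} (ψ : ℕ → (Fin d → ℝ) → Fin d → ℝ) (w : Fin (Nc + 1) → Fin d → ℝ) :
    Fin (Nc + 1) → Fin d → ℝ :=
  fun j =>
    if _ : j.val = 0 then w j
    else w j - ψ j.val (w ⟨j.val - 1, lt_of_le_of_lt (Nat.sub_le _ _) j.isLt⟩)

namespace Astar

variable {d Nc : ℕ} (ψ : ℕ → (Fin d → ℝ) → Fin d → ℝ)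

/-- The Fréchet derivative `DA_*(w)`, as a block lower bidiagonal operator. -/
noncomputable def linearization (w : Fin (Nc + 1) → Fin d → ℝ) :
    (Fin (Nc + 1) → Fin d → ℝ) →L[ℝ] (Fin (Nc + 1) → Fin d → ℝ) :=
  ContinuousLinearMap.pi fun j =>
    if j.val = 0 then ContinuousLinearMap.proj (R := ℝ) (φ := fun _ => Fin d → ℝ) j
    else ContinuousLinearMap.proj (R := ℝ) (φ := fun _ => Fin d → ℝ) j -
      (fderiv ℝ (ψ j) (w ⟨j - 1, by omega⟩)).comp
        (ContinuousLinearMap.proj (R := ℝ) (φ := fun _ => Fin d → ℝ) ⟨j - 1, by omega⟩)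

theorem linearization_apply_of_eq_zero (w u : Fin (Nc + 1) → Fin d → ℝ) {j : Fin (Nc + 1)}
    (hj : j.val = 0) : linearization ψ w u j = u j := by
  simp only [linearization, ContinuousLinearMap.pi_apply, hj, if_true]
  rfl

theorem linearization_apply_of_ne_zero (w u : Fin (Nc + 1) → Fin d → ℝ) {j : Fin (Nc + 1)}
    (hj : j.val ≠ 0) :
    linearization ψ w u j = u j - fderiv ℝ (ψ j) (w ⟨j - 1, by omega⟩) (u ⟨j - 1, by omega⟩) := by
  simp only [linearization, ContinuousLinearMap.pi_apply, hj, if_false]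
  rfl

theorem hasFDerivAt (hψ : ∀ j, 1 ≤ j → j ≤ Nc → Differentiable ℝ (ψ j))
    (w : Fin (Nc + 1) → Fin d → ℝ) : HasFDerivAt (Astar ψ) (linearization ψ w) w := by
  rw [hasFDerivAt_pi']
  intro j
  unfold linearization
  rw [ContinuousLinearMap.proj_pi]
  have hproj (i : Fin (Nc + 1)) :=
    (ContinuousLinearMap.proj (R := ℝ) (φ := fun _ => Fin d → ℝ) i).hasFDerivAt (x := w)
  by_cases hj : j.val = 0
  · simpa [Astar, hj] using hproj j
  · have hψj := ((hψ j (by omega) (by omega)) (w ⟨j - 1, by omega⟩)).hasFDerivAt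
    simpa [Astar, hj] using (hproj j).sub (hψj.comp w (hproj ⟨j - 1, by omega⟩))

theorem linearization_injective (w : Fin (Nc + 1) → Fin d → ℝ) :
    Function.Injective (linearization ψ w) := by
  rw [injective_iff_map_eq_zero]
  intro u hu
  suffices ∀ k (j : Fin (Nc + 1)), j.val = k → u j = 0 from funext fun j => this j j rfl
  intro k
  induction k with
  | zero =>
    intro j hj
    rw [← linearization_apply_of_eq_zero ψ w u hj, hu, Pi.zero_apply]
  | succ k ih =>
    intro j hj
    have hprev := ih ⟨j - 1, by omega⟩ (by simp [hj])
    have := linearization_apply_of_ne_zero ψ w u (j := j) (by omega)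
    rwa [hu, hprev, map_zero, sub_zero, Pi.zero_apply, eq_comm] at this

theorem linearization_bijective (w : Fin (Nc + 1) → Fin d → ℝ) :
    Function.Bijective (linearization ψ w) :=
  ⟨linearization_injective ψ w, LinearMap.injective_iff_surjective.mp (linearization_injective ψ w)⟩

noncomputable def linearizationEquiv (w : Fin (Nc + 1) → Fin d → ℝ) :
    (Fin (Nc + 1) → Fin d → ℝ) ≃L[ℝ] (Fin (Nc + 1) → Fin d → ℝ) :=
  (LinearEquiv.ofBijective (linearization ψ w : _ →ₗ[ℝ] _)
    (linearization_bijective ψ w)).toContinuousLinearEquiv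

theorem linearization_apply_sub_eq (g wk wk1 : Fin (Nc + 1) → Fin d → ℝ)
    (h0 : wk1 0 = g 0)
    (hrec : ∀ j : Fin (Nc + 1), j.val ≠ 0 →
      wk1 j = ψ j (wk ⟨j - 1, by omega⟩)
        + fderiv ℝ (ψ j) (wk ⟨j - 1, by omega⟩) (wk1 ⟨j - 1, by omega⟩ - wk ⟨j - 1, by omega⟩)
        + g j) :
    linearization ψ wk (wk1 - wk) = g - Astar ψ wk := by
  funext j
  by_cases hj : j.val = 0
  · obtain rfl : j = 0 := Fin.ext hj
    simp [linearization_apply_of_eq_zero ψ wk _ hj, Astar, h0]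
  · rw [linearization_apply_of_ne_zero ψ wk _ hj, Pi.sub_apply, Pi.sub_apply, Pi.sub_apply,
      hrec j hj]
    simp only [Astar, dif_neg hj]
    abel

end Astar

/-- Two-grid MGRIT with Δ-correction and trivial coarse propagator `Φ_c ≡ 0` is exactly
Newton's method on the ideal coarse residual equation: `DA_*(w)` is invertible for every
`w`, and the Δ-corrected coarse solve with `Φ_c ≡ 0` produces exactly the Newton iterate
`w^{k+1} = w^k + (DA_*(w^k))⁻¹ (f_c - A_*(w^k))`. -/
theorem stmt6 {d m Nc : ℕ}
    (Φ : (Fin d → ℝ) → Fin d → ℝ) (f : ℕ → Fin d → ℝ)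
    (hdiff : ∀ j, 1 ≤ j → j ≤ Nc → Differentiable ℝ (psi Φ f m j))
    (wk wk1 : Fin (Nc + 1) → Fin d → ℝ)
    -- the Δ-corrected coarse solve with Φ_c ≡ 0
    (h0 : wk1 ⟨0, Nat.succ_pos Nc⟩ = f 0)
    (hrec : ∀ (j : ℕ) (h1 : 1 ≤ j) (h2 : j ≤ Nc),
      wk1 ⟨j, Nat.lt_succ_of_le h2⟩ =
        psi Φ f m j (wk ⟨j - 1, by omega⟩)
          + fderiv ℝ (psi Φ f m j) (wk ⟨j - 1, by omega⟩)
              (wk1 ⟨j - 1, by omega⟩ - wk ⟨j - 1, by omega⟩)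
          + f (j * m)) :
    (∀ w : Fin (Nc + 1) → Fin d → ℝ,
      ∃ E : (Fin (Nc + 1) → Fin d → ℝ) ≃L[ℝ] (Fin (Nc + 1) → Fin d → ℝ),
        HasFDerivAt (Astar (psi Φ f m)) E.toContinuousLinearMap w) ∧
    (∀ E : (Fin (Nc + 1) → Fin d → ℝ) ≃L[ℝ] (Fin (Nc + 1) → Fin d → ℝ),
      HasFDerivAt (Astar (psi Φ f m)) E.toContinuousLinearMap wk →
      wk1 = wk + E.symm ((fun j : Fin (Nc + 1) => f (j.val * m)) - Astar (psi Φ f m) wk)) := by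
  refine ⟨fun w => ⟨Astar.linearizationEquiv _ w, Astar.hasFDerivAt _ hdiff w⟩, fun E hE => ?_⟩
  have hE_eq : E.toContinuousLinearMap = Astar.linearization _ wk :=
    hE.unique (Astar.hasFDerivAt _ hdiff wk)
  have hstep := Astar.linearization_apply_sub_eq (psi Φ f m) (fun j => f (j.val * m)) wk wk1
    (by simpa using h0) (fun j hj => hrec j (by omega) (by omega))
  rw [← hE_eq] at hstep
  rw [← hstep, ContinuousLinearEquiv.coe_coe, E.symm_apply_apply, add_sub_cancel]
end

section
/- Asymptotic value of θ for a forward Euler fine grid: let m ≥ 1, let f : ℝ → ℝ be continuously differentiable, and let u_0 ∈ ℝ satisfy f(u_0) ≠ 0 and f′(u_0) ≠ 0. For h > 0 let u_0(h) = u_0 and u_{i+1}(h) = u_i(h) + h·f(u_i(h)) be the forward Euler iterates, and when f(u_m(h)) ≠ f(u_0) define θ(h) = (f(u_m(h)) − (1/m)∑_{i=0}^{m−1} f(u_i(h))) / (f(u_m(h)) − f(u_0)). Then there exists h_0 > 0 such that θ(h) is defined for all 0 < h < h_0, and θ(h) → (m+1)/(2m) as h → 0⁺. -/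
/-!
At `h = 0` every Euler iterate equals `u₀`, and differentiating the recursion gives
`d/dh u_i(h) |_{h=0} = i f(u₀)`. Hence numerator and denominator of `θ(h)` both vanish at `h = 0`
and have derivatives `c (m+1)/2` and `c m` there, with `c = f'(u₀) f(u₀) ≠ 0`; the quotient of
their difference quotients tends to `(m+1)/(2m)`.
-/

open Filter Topology Set

def fe (f : ℝ → ℝ) (u0 h : ℝ) : ℕ → ℝ
  | 0 => u0
  | (i + 1) => fe f u0 h i + h * f (fe f u0 h i)

theorem fe_step_zero (f : ℝ → ℝ) (u0 : ℝ) : ∀ i, fe f u0 0 i = u0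
  | 0 => rfl
  | (i + 1) => by simp [fe, fe_step_zero f u0 i]

theorem hasDerivAt_fe {f : ℝ → ℝ} {u0 : ℝ} (hf : DifferentiableAt ℝ f u0) :
    ∀ i : ℕ, HasDerivAt (fun h => fe f u0 h i) (i * f u0) 0
  | 0 => by simpa [fe] using hasDerivAt_const (0 : ℝ) u0
  | (i + 1) => by
      have hfi : HasDerivAt f (deriv f u0) (fe f u0 0 i) := by
        rw [fe_step_zero]; exact hf.hasDerivAt
      refine ((hasDerivAt_fe hf i).add
        ((hasDerivAt_id' 0).mul (hfi.comp 0 (hasDerivAt_fe hf i)))).congr_deriv ?_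
      simp only [Function.comp_apply, fe_step_zero]
      push_cast
      ring

theorem hasDerivAt_comp_fe {f : ℝ → ℝ} {u0 : ℝ} (hf : DifferentiableAt ℝ f u0) (i : ℕ) :
    HasDerivAt (fun h => f (fe f u0 h i)) (deriv f u0 * f u0 * i) 0 := by
  have hfi : HasDerivAt f (deriv f u0) (fe f u0 0 i) := by
    rw [fe_step_zero]; exact hf.hasDerivAt
  exact (hfi.comp 0 (hasDerivAt_fe hf i)).congr_deriv (by ring)

/-- A pointwise l'Hôpital rule: only differentiability at `x` itself is needed. -/
theorem tendsto_div_of_hasDerivAt_of_eq_zero {F G : ℝ → ℝ} {a b x : ℝ} (hF : HasDerivAt F a x)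
    (hG : HasDerivAt G b x) (hF0 : F x = 0) (hG0 : G x = 0) (hb : b ≠ 0) :
    Tendsto (fun y => F y / G y) (𝓝[≠] x) (𝓝 (a / b)) := by
  refine ((hasDerivAt_iff_tendsto_slope.mp hF).div (hasDerivAt_iff_tendsto_slope.mp hG) hb).congr'
    ?_
  filter_upwards [self_mem_nhdsWithin] with y hy
  have hyx : y - x ≠ 0 := sub_ne_zero.mpr hy
  simp only [Pi.div_apply, slope_def_field, hF0, hG0, sub_zero]
  field_simp

theorem sum_range_natCast_mul_two (m : ℕ) :
    (∑ i ∈ Finset.range m, (i : ℝ)) * 2 = m * (m - 1) := by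
  induction m with
  | zero => simp
  | succ n ih => rw [Finset.sum_range_succ]; push_cast; linear_combination ih

/-- Asymptotic value of θ for a forward Euler fine grid: if `f` is `C¹` with
`f(u_0) ≠ 0` and `f'(u_0) ≠ 0`, then
`θ(h) = (f(u_m(h)) - (1/m) ∑_{i=0}^{m-1} f(u_i(h))) / (f(u_m(h)) - f(u_0))`
is defined for all sufficiently small `h > 0` and `θ(h) → (m+1)/(2m)` as `h → 0⁺`. -/
theorem stmt13 (m : ℕ) (hm : 1 ≤ m) (f : ℝ → ℝ) (hf : ContDiff ℝ 1 f)
    (u0 : ℝ) (hf0 : f u0 ≠ 0) (hf'0 : deriv f u0 ≠ 0) :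
    ∃ h0 > 0,
      (∀ h : ℝ, 0 < h → h < h0 → f (fe f u0 h m) ≠ f u0) ∧
      Filter.Tendsto
        (fun h : ℝ =>
          (f (fe f u0 h m) - (1 / (m : ℝ)) * ∑ i ∈ Finset.range m, f (fe f u0 h i))
            / (f (fe f u0 h m) - f u0))
        (nhdsWithin 0 (Set.Ioi 0))
        (nhds (((m : ℝ) + 1) / (2 * (m : ℝ)))) := by
  have hm0 : (m : ℝ) ≠ 0 := by positivity
  have hdf : DifferentiableAt ℝ f u0 := hf.differentiable one_ne_zero u0
  have hfm := hasDerivAt_comp_fe hdf m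
  set c := deriv f u0 * f u0
  have hc : c ≠ 0 := mul_ne_zero hf'0 hf0
  have hcm : c * m ≠ 0 := mul_ne_zero hc hm0
  have hnum : HasDerivAt
      (fun h => f (fe f u0 h m) - (1 / (m : ℝ)) * ∑ i ∈ Finset.range m, f (fe f u0 h i))
      (c * ((m + 1) / 2)) 0 := by
    refine (hfm.sub ((HasDerivAt.fun_sum fun i _ => hasDerivAt_comp_fe hdf i).const_mul
      (1 / (m : ℝ)))).congr_deriv ?_
    rw [← Finset.mul_sum]
    field_simp
    linear_combination -c * sum_range_natCast_mul_two m
  obtain ⟨h0, hh0, hne⟩ := mem_nhdsGT_iff_exists_Ioo_subset.mp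
    (nhdsGT_le_nhdsNE 0 (hfm.eventually_ne (c := f u0) hcm))
  refine ⟨h0, hh0, fun h hpos hlt => hne ⟨hpos, hlt⟩, ?_⟩
  have hlim : c * ((m + 1) / 2) / (c * m) = ((m : ℝ) + 1) / (2 * m) := by field_simp
  rw [← hlim]
  refine (tendsto_div_of_hasDerivAt_of_eq_zero hnum (hfm.sub_const (f u0)) ?_ ?_ hcm).mono_left
    (nhdsGT_le_nhdsNE 0)
  · simp only [fe_step_zero, Finset.sum_const, Finset.card_range, nsmul_eq_mul]
    field_simp
    ring
  · simp [fe_step_zero]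
end

section
/- Asymptotic value of θ for a backward Euler fine grid: let m ≥ 1, let f : ℝ → ℝ be continuously differentiable, and let u_0 ∈ ℝ satisfy f(u_0) ≠ 0 and f′(u_0) ≠ 0. Suppose that for each sufficiently small h > 0 there are points u_1(h), …, u_m(h) satisfying the backward Euler recursion u_{i+1}(h) = u_i(h) + h·f(u_{i+1}(h)) (with u_0(h) = u_0), and that u_i(h) → u_0 as h → 0⁺ for each 1 ≤ i ≤ m. When f(u_m(h)) ≠ f(u_0), define θ(h) = (f(u_m(h)) − (1/m)∑_{i=1}^{m} f(u_i(h))) / (f(u_m(h)) − f(u_0)). Then there exists h_0 > 0 such that θ(h) is defined for all 0 < h < h_0, and θ(h) → (m−1)/(2m) as h → 0⁺. -/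
/-!
Unrolling the backward Euler recursion gives `u_i - u_0 = h S_i` with `S_i = ∑_{j ≤ i} f(u_j)`,
so `f(u_i) - f(u_0) = h D_i` with `D_i = (dslope f u_0)(u_i) · S_i → i f'(u_0) f(u_0)`.
Cancelling `h` in the numerator and denominator of `θ(h)` leaves a quotient of the `D_i`, whose
limit is `(m - (m + 1)/2) / m = (m - 1)/(2m)`.
-/

open Filter Topology Finset

theorem sum_Icc_one_natCast (m : ℕ) : ∑ i ∈ Icc 1 m, (i : ℝ) = m * (m + 1) / 2 := by
  induction m with
  | zero => simp
  | succ n ih =>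
    rw [sum_Icc_succ_top (by omega), ih]
    push_cast
    ring

theorem eq_add_mul_sum_Icc_of_backwardEuler {R : Type*} [Semiring R] {x y : ℕ → R} {h : R}
    {m : ℕ} (hrec : ∀ i < m, x (i + 1) = x i + h * y (i + 1)) :
    ∀ i ≤ m, x i = x 0 + h * ∑ j ∈ Icc 1 i, y j := by
  intro i hi
  induction i with
  | zero => simp
  | succ i ih =>
    rw [hrec i (by omega), ih (by omega), sum_Icc_succ_top (by omega), mul_add, add_assoc]

theorem theta_eq_of_eq_add_mul {m : ℕ} (hm : 1 ≤ m) {y D : ℕ → ℝ} {c h : ℝ} (hh : h ≠ 0)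
    (hy : ∀ i ∈ Icc 1 m, y i = c + h * D i) :
    (y m - (1 / m) * ∑ i ∈ Icc 1 m, y i) / (y m - c)
      = (D m - (1 / m) * ∑ i ∈ Icc 1 m, D i) / D m := by
  have hmR : (m : ℝ) ≠ 0 := Nat.cast_ne_zero.mpr (by omega)
  rw [sum_congr rfl hy, sum_add_distrib, sum_const, Nat.card_Icc, ← mul_sum,
    hy m (right_mem_Icc.mpr hm)]
  simp only [Nat.add_sub_cancel, nsmul_eq_mul]
  rw [← mul_div_mul_left _ (D m) hh]
  congr 1
  · field_simp
    ring
  · ring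

theorem tendsto_theta_of_tendsto_natCast_mul {α : Type*} {l : Filter α} {m : ℕ} (hm : 1 ≤ m)
    {a : ℝ} (ha : a ≠ 0) {D : ℕ → α → ℝ} (hD : ∀ i ∈ Icc 1 m, Tendsto (D i) l (𝓝 (i * a))) :
    Tendsto (fun x => (D m x - (1 / m) * ∑ i ∈ Icc 1 m, D i x) / D m x) l
      (𝓝 (((m : ℝ) - 1) / (2 * m))) := by
  have hmR : (m : ℝ) ≠ 0 := Nat.cast_ne_zero.mpr (by omega)
  have hDm := hD m (right_mem_Icc.mpr hm)
  have hlim := (hDm.sub ((tendsto_finsetSum _ hD).const_mul (1 / (m : ℝ)))).div hDm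
    (mul_ne_zero hmR ha)
  have hval : (m * a - 1 / m * ∑ i ∈ Icc 1 m, i * a) / (m * a) = ((m : ℝ) - 1) / (2 * m) := by
    rw [← sum_mul, sum_Icc_one_natCast]
    field_simp
    ring
  rwa [hval] at hlim

theorem tendsto_dslope_mul_sum_Icc {α : Type*} {l : Filter α} {f : ℝ → ℝ} {a : ℝ}
    (hf : DifferentiableAt ℝ f a) {v : α → ℕ → ℝ} {n : ℕ} (hn : 1 ≤ n)
    (hv : ∀ j ∈ Icc 1 n, Tendsto (fun x => v x j) l (𝓝 a)) :
    Tendsto (fun x => dslope f a (v x n) * ∑ j ∈ Icc 1 n, f (v x j)) l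
      (𝓝 (n * (deriv f a * f a))) := by
  have hslope : Tendsto (fun x => dslope f a (v x n)) l (𝓝 (deriv f a)) := by
    rw [← dslope_same]
    exact (continuousAt_dslope_same.mpr hf).tendsto.comp (hv n (right_mem_Icc.mpr hn))
  have hsum : Tendsto (fun x => ∑ j ∈ Icc 1 n, f (v x j)) l (𝓝 (n * f a)) := by
    simpa using tendsto_finsetSum (Icc 1 n) fun j hj => hf.continuousAt.tendsto.comp (hv j hj)
  convert hslope.mul hsum using 2
  ring

/-- Asymptotic value of θ for a backward Euler fine grid: suppose `f` is `C¹` with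
`f(u_0) ≠ 0` and `f'(u_0) ≠ 0`, and suppose `u_1(h), …, u_m(h)` satisfy the backward Euler
recursion `u_{i+1}(h) = u_i(h) + h f(u_{i+1}(h))` for all sufficiently small `h > 0`, with
`u_i(h) → u_0` as `h → 0⁺` for `1 ≤ i ≤ m`. Then
`θ(h) = (f(u_m(h)) - (1/m) ∑_{i=1}^{m} f(u_i(h))) / (f(u_m(h)) - f(u_0))`
is defined for all sufficiently small `h > 0` and `θ(h) → (m-1)/(2m)` as `h → 0⁺`. -/
theorem stmt14 (m : ℕ) (hm : 1 ≤ m) (f : ℝ → ℝ) (hf : ContDiff ℝ 1 f)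
    (u0 : ℝ) (hf0 : f u0 ≠ 0) (hf'0 : deriv f u0 ≠ 0)
    (u : ℝ → ℕ → ℝ)
    (hu0 : ∀ h : ℝ, u h 0 = u0)
    (hrec : ∃ h1 > (0 : ℝ), ∀ h : ℝ, 0 < h → h < h1 →
      ∀ i < m, u h (i + 1) = u h i + h * f (u h (i + 1)))
    (hconv : ∀ i : ℕ, 1 ≤ i → i ≤ m →
      Filter.Tendsto (fun h : ℝ => u h i) (nhdsWithin 0 (Set.Ioi 0)) (nhds u0)) :
    ∃ h0 > (0 : ℝ),
      (∀ h : ℝ, 0 < h → h < h0 → f (u h m) ≠ f u0) ∧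
      Filter.Tendsto
        (fun h : ℝ =>
          (f (u h m) - (1 / (m : ℝ)) * ∑ i ∈ Finset.Icc 1 m, f (u h i))
            / (f (u h m) - f u0))
        (nhdsWithin 0 (Set.Ioi 0))
        (nhds (((m : ℝ) - 1) / (2 * (m : ℝ)))) := by
  obtain ⟨h1, h1pos, hrec⟩ := hrec
  have hfd : DifferentiableAt ℝ f u0 := hf.differentiable one_ne_zero u0
  set D : ℕ → ℝ → ℝ := fun i h => dslope f u0 (u h i) * ∑ j ∈ Icc 1 i, f (u h j)
  have ha : deriv f u0 * f u0 ≠ 0 := mul_ne_zero hf'0 hf0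
  have hD : ∀ i ∈ Icc 1 m, Tendsto (D i) (𝓝[>] 0) (𝓝 (i * (deriv f u0 * f u0))) := by
    intro i hi
    obtain ⟨hi1, him⟩ := mem_Icc.mp hi
    exact tendsto_dslope_mul_sum_Icc hfd hi1 fun j hj =>
      hconv j (mem_Icc.mp hj).1 ((mem_Icc.mp hj).2.trans him)
  have hinc : ∀ᶠ h in 𝓝[>] (0 : ℝ), h ≠ 0 ∧ ∀ i ≤ m, f (u h i) = f u0 + h * D i h := by
    filter_upwards [Ioo_mem_nhdsGT h1pos] with h ⟨hpos, hlt⟩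
    refine ⟨hpos.ne', fun i hi => ?_⟩
    have hstep : u h i - u0 = h * ∑ j ∈ Icc 1 i, f (u h j) := by
      rw [eq_add_mul_sum_Icc_of_backwardEuler (x := u h) (y := fun j => f (u h j))
        (hrec h hpos hlt) i hi, hu0, add_sub_cancel_left]
    rw [eq_add_of_sub_eq' (sub_smul_dslope f u0 (u h i)).symm, hstep, smul_eq_mul, mul_assoc,
      mul_comm (∑ j ∈ Icc 1 i, f (u h j))]
  have hne : ∀ᶠ h in 𝓝[>] (0 : ℝ), f (u h m) ≠ f u0 := by
    filter_upwards [hinc, (hD m (right_mem_Icc.mpr hm)).eventually_ne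
      (mul_ne_zero (Nat.cast_ne_zero.mpr (by omega)) ha)] with h ⟨hh, hfu⟩ hDm
    simpa [hfu m le_rfl, hh] using hDm
  obtain ⟨h0, h0pos, hsub⟩ := mem_nhdsGT_iff_exists_Ioo_subset.mp hne
  refine ⟨h0, h0pos, fun h hpos hlt => hsub ⟨hpos, hlt⟩, ?_⟩
  refine (tendsto_theta_of_tendsto_natCast_mul hm ha hD).congr' ?_
  filter_upwards [hinc] with h ⟨hh, hfu⟩
  exact (theta_eq_of_eq_add_mul hm hh fun i hi => hfu i (mem_Icc.mp hi).2).symm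
end
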